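/- For every non-trivial rule word w and every initial configuration (C,p,d), the orbit of the ant is unbounded: the set of positions {p_t : t ≥ 0}, where (C_t,p_t,d_t) = T_w^t(C,p,d), is infinite. -/

import Mathlib

/-- Cells of the grid `ℤ²`. -/
abbrev Cell : Type := ℤ × ℤ

/-- The two letters of a rule word. -/
inductive Letter : Type
  | L | R
deriving DecidableEq

/-- The four unit directions of `ℤ²` (the state set `Q`). -/
inductive Dir : Type
  | E | N | W | S
deriving DecidableEq

/-- Rotation by 90° counterclockwise. -/
def Dir.left : Dir → Dir
  | .E => .N | .N => .W | .W => .S | .S => .E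

/-- Rotation by 90° clockwise. -/
def Dir.right : Dir → Dir
  | .E => .S | .S => .W | .W => .N | .N => .E

/-- The unit vector of a direction. -/
def Dir.vec : Dir → Cell
  | .E => (1, 0) | .N => (0, 1) | .W => (-1, 0) | .S => (0, -1)

/-- Configurations: a picture `ℤ² → ℤ/nℤ`, a position and a direction. -/
abbrev Config (n : ℕ) : Type := (Cell → ZMod n) × Cell × Dir

/-- One step of the generalised ant with rule word `w ∈ {L,R}⁺`:
the symbol under the ant is increased by `1 (mod |w|)`, the ant turns left or
right according to the letter `w_{C(p)}`, and moves one step in its new direction. -/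
def antStepW (w : List Letter) (cfg : Config w.length) : Config w.length :=
  let C := cfg.1
  let p := cfg.2.1
  let d' := if w.getD (C p).val Letter.L = Letter.L then cfg.2.2.left else cfg.2.2.right
  (Function.update C p (C p + 1), p + d'.vec, d')

/-! If the ant visited only finitely many cells, some cell is visited infinitely often; let `M`
be the highest such cell, and the rightmost among the highest. From some time on the ant never
stands on the cells north and east of `M`, so it arrives at `M` moving north or east and leaves
moving west or south: arriving northward it must turn left, arriving eastward it must turn right.
The colour of `M` goes up by one at each visit, so late visits find `M` with every colour, once
reading `L` and once reading `R`. But the axis of the ant's direction plus the parity of `x + y`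
is invariant, so all arrivals at `M` are along the same axis. -/

namespace Dir

def axis : Dir → ZMod 2
  | .E => 0 | .N => 1 | .W => 0 | .S => 1

lemma axis_left (d : Dir) : d.left.axis = d.axis + 1 := by cases d <;> decide

lemma axis_right (d : Dir) : d.right.axis = d.axis + 1 := by cases d <;> decide

lemma eq_ite_of_turn_eq_W_or_S {d : Dir} {b : Prop} [Decidable b] (hd : d = .N ∨ d = .E)
    (ht : (if b then d.left else d.right) = .W ∨ (if b then d.left else d.right) = .S) :
    d = if b then .N else .E := by
  by_cases hb : b <;> rcases hd with rfl | rfl <;> simp_all [left, right]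

end Dir

def cellParity (q : Cell) : ZMod 2 := q.1 + q.2

lemma cellParity_add_vec (q : Cell) (d : Dir) : cellParity (q + d.vec) = cellParity q + 1 := by
  cases d <;> simp [cellParity, Dir.vec] <;> ring_nf

theorem exists_infinite_fiber_of_finite_range {α : Type*} {f : ℕ → α}
    (hf : (Set.range f).Finite) : ∃ a, {t | f t = a}.Infinite := by
  by_contra! h
  have hcover := hf.biUnion (t := fun a => f ⁻¹' {a}) fun a _ => h a
  rw [Set.biUnion_range_preimage_singleton] at hcover
  exact Set.infinite_univ hcover

open Filter in
theorem exists_infinite_fiber_eventually_avoids_north_east {f : ℕ → Cell}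
    (hf : (Set.range f).Finite) :
    ∃ M, {t | f t = M}.Infinite ∧ ∀ᶠ t in atTop, f t ≠ M + Dir.N.vec ∧ f t ≠ M + Dir.E.vec := by
  set R : Set Cell := {q | {t | f t = q}.Infinite}
  have hR : R.Finite := hf.subset fun q hq => by
    obtain ⟨t, rfl⟩ := hq.nonempty
    exact ⟨t, rfl⟩
  obtain ⟨M, hMR, hMmax⟩ :=
    R.exists_max_image (fun q => toLex (q.2, q.1)) hR (exists_infinite_fiber_of_finite_range hf)
  have hlate : ∀ q : Cell, toLex (M.2, M.1) < toLex (q.2, q.1) → ∀ᶠ t in atTop, f t ≠ q :=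
    fun q hq => not_frequently.mp fun hfreq =>
      (hMmax q (Nat.frequently_atTop_iff_infinite.mp hfreq)).not_gt hq
  refine ⟨M, hMR, (hlate _ ?_).and (hlate _ ?_)⟩ <;> simp [Prod.Lex.toLex_lt_toLex, Dir.vec]

section Ant

variable {w : List Letter}

lemma antStepW_pos (x : Config w.length) : (antStepW w x).2.1 = x.2.1 + (antStepW w x).2.2.vec :=
  rfl

lemma antStepW_dir (x : Config w.length) :
    (antStepW w x).2.2 =
      if w.getD (x.1 x.2.1).val Letter.L = Letter.L then x.2.2.left else x.2.2.right :=
  rfl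

lemma antStepW_axis_add_cellParity (x : Config w.length) :
    (antStepW w x).2.2.axis + cellParity (antStepW w x).2.1 = x.2.2.axis + cellParity x.2.1 := by
  have haxis : (antStepW w x).2.2.axis = x.2.2.axis + 1 := by
    rw [antStepW_dir]
    split <;> simp only [Dir.axis_left, Dir.axis_right]
  rw [antStepW_pos, cellParity_add_vec, haxis]
  ring_nf
  reduce_mod_char

lemma iterate_antStepW_axis_add_cellParity (x : Config w.length) (t : ℕ) :
    ((antStepW w)^[t] x).2.2.axis + cellParity ((antStepW w)^[t] x).2.1 =
      x.2.2.axis + cellParity x.2.1 := by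
  induction t with
  | zero => rfl
  | succ t ih => rw [Function.iterate_succ_apply', antStepW_axis_add_cellParity, ih]

lemma iterate_antStepW_color (x : Config w.length) (q : Cell) (t : ℕ) :
    ((antStepW w)^[t] x).1 q = x.1 q + Nat.count (fun s => ((antStepW w)^[s] x).2.1 = q) t := by
  induction t with
  | zero => simp
  | succ t ih =>
    rw [Function.iterate_succ_apply', Nat.count_succ]
    by_cases hq : ((antStepW w)^[t] x).2.1 = q
    · simp [antStepW, hq, ih, add_assoc]
    · rw [if_neg hq, add_zero, ← ih]
      exact Function.update_of_ne (Ne.symm hq) _ _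

lemma antStepW_dir_eq_N_or_E {x : Config w.length} {M : Cell} (hM : (antStepW w x).2.1 = M)
    (hN : x.2.1 ≠ M + Dir.N.vec) (hE : x.2.1 ≠ M + Dir.E.vec) :
    (antStepW w x).2.2 = .N ∨ (antStepW w x).2.2 = .E := by
  rw [antStepW_pos] at hM
  subst hM
  generalize (antStepW w x).2.2 = d at hN hE
  cases d <;> simp_all [Dir.vec, Prod.ext_iff]

lemma antStepW_dir_eq_W_or_S {x : Config w.length} {M : Cell} (hM : x.2.1 = M)
    (hN : (antStepW w x).2.1 ≠ M + Dir.N.vec) (hE : (antStepW w x).2.1 ≠ M + Dir.E.vec) :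
    (antStepW w x).2.2 = .W ∨ (antStepW w x).2.2 = .S := by
  rw [antStepW_pos, hM] at hN hE
  generalize (antStepW w x).2.2 = d at hN hE
  cases d <;> simp_all

lemma antStepW_dir_eq_of_corner {x : Config w.length} {M : Cell} (hM : (antStepW w x).2.1 = M)
    (hprev : x.2.1 ≠ M + Dir.N.vec ∧ x.2.1 ≠ M + Dir.E.vec)
    (hnext : (antStepW w (antStepW w x)).2.1 ≠ M + Dir.N.vec ∧
      (antStepW w (antStepW w x)).2.1 ≠ M + Dir.E.vec) :
    (antStepW w x).2.2 =
      if w.getD ((antStepW w x).1 M).val Letter.L = Letter.L then .N else .E := by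
  have hexit := antStepW_dir_eq_W_or_S hM hnext.1 hnext.2
  rw [antStepW_dir, hM] at hexit
  exact Dir.eq_ite_of_turn_eq_W_or_S (antStepW_dir_eq_N_or_E hM hprev.1 hprev.2) hexit

lemma exists_iterate_antStepW_visit_color_eq [NeZero w.length] (x : Config w.length) {q : Cell}
    (hq : {t | ((antStepW w)^[t] x).2.1 = q}.Infinite) (r : ZMod w.length) (T : ℕ) :
    ∃ t, T < t ∧ ((antStepW w)^[t] x).2.1 = q ∧ ((antStepW w)^[t] x).1 q = r := by
  set j := (r - x.1 q).val + w.length * (T + 1)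
  have hTj : T < j := by
    have := Nat.le_mul_of_pos_left (T + 1) (NeZero.pos w.length)
    omega
  refine ⟨Nat.nth _ j, hTj.trans_le ((Nat.nth_strictMono hq).id_le j),
    Nat.nth_mem_of_infinite hq j, ?_⟩
  rw [iterate_antStepW_color, Nat.count_nth_of_infinite hq]
  simp [j]

lemma iterate_antStepW_dir_eq_of_corner (x : Config w.length) {M : Cell} {T t : ℕ}
    (hT : ∀ s ≥ T, ((antStepW w)^[s] x).2.1 ≠ M + Dir.N.vec ∧
      ((antStepW w)^[s] x).2.1 ≠ M + Dir.E.vec)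
    (hTt : T < t) (hM : ((antStepW w)^[t] x).2.1 = M) :
    ((antStepW w)^[t] x).2.2 =
      if w.getD (((antStepW w)^[t] x).1 M).val Letter.L = Letter.L then .N else .E := by
  obtain ⟨s, rfl⟩ := Nat.exists_eq_add_of_lt hTt
  rw [Function.iterate_succ_apply'] at hM ⊢
  refine antStepW_dir_eq_of_corner hM (hT _ (by omega)) ?_
  simpa [Function.iterate_succ_apply'] using hT (T + s + 2) (by omega)

end Ant

/-- For every non-trivial rule word `w` (containing at least one `L`
and one `R`) and every initial configuration, the orbit of the ant is unbounded:
the set of visited positions is infinite. -/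
theorem ant_orbit_unbounded (w : List Letter)
    (hL : Letter.L ∈ w) (hR : Letter.R ∈ w) (cfg : Config w.length) :
    {q : Cell | ∃ t : ℕ, ((antStepW w)^[t] cfg).2.1 = q}.Infinite := by
  intro hfin
  have : NeZero w.length := ⟨(List.length_pos_of_mem hL).ne'⟩
  obtain ⟨M, hMinf, hcorner⟩ := exists_infinite_fiber_eventually_avoids_north_east hfin
  obtain ⟨T, hT⟩ := Filter.eventually_atTop.mp hcorner
  have hvisit : ∀ i (hi : i < w.length), ∃ t, ((antStepW w)^[t] cfg).2.1 = M ∧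
      ((antStepW w)^[t] cfg).2.2 = if w[i] = Letter.L then .N else .E := by
    intro i hi
    obtain ⟨t, hTt, hM, hcolor⟩ :=
      exists_iterate_antStepW_visit_color_eq cfg hMinf (i : ZMod w.length) T
    refine ⟨t, hM, ?_⟩
    rw [iterate_antStepW_dir_eq_of_corner cfg hT hTt hM, hcolor, ZMod.val_cast_of_lt hi,
      List.getD_eq_getElem w _ hi]
  obtain ⟨iL, hiL, hwL⟩ := List.getElem_of_mem hL
  obtain ⟨iR, hiR, hwR⟩ := List.getElem_of_mem hR
  obtain ⟨tL, hML, hdirL⟩ := hvisit iL hiL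
  obtain ⟨tR, hMR, hdirR⟩ := hvisit iR hiR
  have hinv := (iterate_antStepW_axis_add_cellParity cfg tL).trans
    (iterate_antStepW_axis_add_cellParity cfg tR).symm
  rw [hML, hMR, hdirL, hdirR, hwL, hwR] at hinv
  exact absurd (add_right_cancel hinv) (by decide)
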